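/- Rank-based exchangeability lemma: If s_1, ..., s_{n+1} are exchangeable real random variables that are almost surely pairwise distinct, then for every k ∈ {1, ..., n+1}, P(rank of s_{n+1} among s_1,...,s_{n+1} equals k) = 1/(n+1), where the rank of s_{n+1} is 1 + #{i ≤ n : s_i < s_{n+1}}. -/

import Mathlib

/-!
For distinct reals `x₁, …, x_N`, the ranks `#{i | xᵢ < xⱼ}` run through `0, …, N - 1`, each
value taken exactly once; so for each `m < N` the events `{rank of s_j = m}` partition the sample
space up to a null set. Exchangeability (applied to the transposition of `j` and `N`) makes all
these events equally likely, hence each has probability `1 / N`.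
-/

open MeasureTheory Finset Function

section Rank

variable {ι α : Type*} [Fintype ι] [LinearOrder α]

/-- The number of coordinates of `x` strictly below `x j`; the paper's rank of `x j` is
`rank x j + 1`. -/
def rank (x : ι → α) (j : ι) : ℕ := #{i | x i < x j}

theorem rank_lt_card (x : ι → α) (j : ι) : rank x j < Fintype.card ι :=
  card_lt_univ_of_notMem (x := j) (by simp)

theorem rank_lt_rank {x : ι → α} {a b : ι} (hab : x a < x b) : rank x a < rank x b :=
  card_lt_card <| (ssubset_iff_of_subset fun i hi => by
      simp only [mem_filter, mem_univ, true_and] at hi ⊢; exact hi.trans hab).mpr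
    ⟨a, by simpa using hab, by simp⟩

theorem rank_injective {x : ι → α} (hx : Injective x) : Injective (rank x) := by
  intro a b h
  by_contra hne
  rcases (hx.ne hne).lt_or_gt with hab | hab
  · exact (rank_lt_rank hab).ne h
  · exact (rank_lt_rank hab).ne' h

theorem existsUnique_rank_eq {x : ι → α} (hx : Injective x) {m : ℕ}
    (hm : m < Fintype.card ι) : ∃! j, rank x j = m := by
  let r : ι → Fin (Fintype.card ι) := fun j => ⟨rank x j, rank_lt_card x j⟩
  have hr : Bijective r := (Fintype.bijective_iff_injective_and_card r).mpr
    ⟨fun a b h => rank_injective hx (Fin.val_eq_of_eq h), (Fintype.card_fin _).symm⟩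
  obtain ⟨j, hj, huniq⟩ := hr.existsUnique ⟨m, hm⟩
  exact ⟨j, congrArg Fin.val hj, fun i hi => huniq i (Fin.ext hi)⟩

theorem rank_comp_perm (x : ι → α) (π : Equiv.Perm ι) (j : ι) :
    rank (fun i => x (π i)) j = rank x (π j) := by
  simp only [rank, card_filter]
  exact Equiv.sum_comp π fun i => if x i < x (π j) then 1 else 0

theorem rank_last {n : ℕ} (x : Fin (n + 1) → α) :
    rank x (Fin.last n) = #{i : Fin n | x i.castSucc < x (Fin.last n)} := by
  simp only [rank, card_filter, Fin.sum_univ_castSucc, lt_irrefl, if_false, add_zero]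

variable [TopologicalSpace α] [OrderClosedTopology α] [SecondCountableTopology α]
  [MeasurableSpace α] [OpensMeasurableSpace α]

theorem measurable_rank (j : ι) : Measurable fun x : ι → α => rank x j := by
  simp only [rank, card_filter]
  exact Finset.measurable_sum _ fun i _ =>
    Measurable.ite ((measurable_pi_apply i).lt (measurable_pi_apply j)).setOf
      measurable_const measurable_const

end Rank

section Measure

variable {Ω : Type*} [MeasurableSpace Ω] {μ : Measure Ω}

theorem sum_measure_eq_measure_univ_of_ae_existsUnique {ι : Type*} [Fintype ι] {A : ι → Set Ω}
    (hA : ∀ j, NullMeasurableSet (A j) μ) (h : ∀ᵐ ω ∂μ, ∃! j, ω ∈ A j) :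
    ∑ j, μ (A j) = μ Set.univ := by
  have hdisj : Pairwise (AEDisjoint μ on A) := fun a b hab =>
    measure_mono_null (by
      rintro ω ⟨ha, hb⟩ ⟨_, _, huniq⟩
      exact hab ((huniq a ha).trans (huniq b hb).symm)) (ae_iff.mp h)
  have hcover : (⋃ j, A j) =ᵐ[μ] (Set.univ : Set Ω) :=
    ae_eq_univ.mpr <| measure_mono_null (by
      rintro ω hω ⟨j, hj, -⟩
      exact hω (Set.mem_iUnion.mpr ⟨j, hj⟩)) (ae_iff.mp h)
  rw [← measure_congr hcover, measure_iUnion₀ hdisj hA, tsum_fintype]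

variable {ι α : Type*} [Fintype ι] [LinearOrder α] [TopologicalSpace α] [OrderClosedTopology α]
  [SecondCountableTopology α] [MeasurableSpace α] [OpensMeasurableSpace α]
  {X : ι → Ω → α}

theorem measure_rank_eq_of_exchangeable (hX : ∀ i, Measurable (X i))
    (hexch : ∀ π : Equiv.Perm ι,
      μ.map (fun ω i => X (π i) ω) = μ.map (fun ω i => X i ω)) (j j' : ι) (m : ℕ) :
    μ {ω | rank (fun i => X i ω) j = m} = μ {ω | rank (fun i => X i ω) j' = m} := by
  classical
  let π := Equiv.swap j' j
  have hS : MeasurableSet {x : ι → α | rank x j' = m} :=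
    measurable_rank j' (measurableSet_singleton m)
  calc μ {ω | rank (fun i => X i ω) j = m}
      = μ.map (fun ω i => X (π i) ω) {x | rank x j' = m} := by
        rw [Measure.map_apply (measurable_pi_lambda _ fun i => hX (π i)) hS,
          Set.preimage_ofPred_eq]
        congr with ω
        rw [show rank (fun i => X (π i) ω) j' = rank (fun i => X i ω) (π j') from
          rank_comp_perm (fun i => X i ω) π j', Equiv.swap_apply_left]
    _ = μ.map (fun ω i => X i ω) {x | rank x j' = m} := by rw [hexch]
    _ = μ {ω | rank (fun i => X i ω) j' = m} := Measure.map_apply (measurable_pi_lambda _ hX) hS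

theorem measure_rank_eq_inv_card [IsProbabilityMeasure μ] (hX : ∀ i, Measurable (X i))
    (hexch : ∀ π : Equiv.Perm ι,
      μ.map (fun ω i => X (π i) ω) = μ.map (fun ω i => X i ω))
    (hdistinct : ∀ᵐ ω ∂μ, Injective fun i => X i ω) (j : ι) {m : ℕ}
    (hm : m < Fintype.card ι) :
    μ {ω | rank (fun i => X i ω) j = m} = (Fintype.card ι : ENNReal)⁻¹ := by
  have hsum := sum_measure_eq_measure_univ_of_ae_existsUnique
    (A := fun j => {ω | rank (fun i => X i ω) j = m})
    (fun j => ((measurable_rank j).comp (measurable_pi_lambda _ hX)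
      (measurableSet_singleton m)).nullMeasurableSet)
    (hdistinct.mono fun _ hω => existsUnique_rank_eq hω hm)
  rw [sum_congr rfl fun i _ => measure_rank_eq_of_exchangeable hX hexch i j m, sum_const,
    card_univ, nsmul_eq_mul, measure_univ, mul_comm] at hsum
  exact ENNReal.eq_inv_of_mul_eq_one_left hsum

end Measure

/-- Rank-based exchangeability lemma: for exchangeable, almost surely pairwise distinct
`s₁,…,s_{n+1}`, the rank of `s_{n+1}` (namely `1 + #{i ≤ n : sᵢ < s_{n+1}}`) is uniform on
`{1,…,n+1}`. -/
theorem rank_of_exchangeable_uniform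
    {Ω : Type*} [MeasurableSpace Ω] (P : Measure Ω) [IsProbabilityMeasure P]
    (n : ℕ)
    (s : Fin (n + 1) → Ω → ℝ) (hmeas : ∀ i, Measurable (s i))
    (hexch : ∀ π : Equiv.Perm (Fin (n + 1)),
      P.map (fun ω => fun i => s (π i) ω) = P.map (fun ω => fun i => s i ω))
    (hdistinct : ∀ᵐ ω ∂P, Function.Injective fun i => s i ω) :
    ∀ k : ℕ, 1 ≤ k → k ≤ n + 1 →
      P {ω | 1 + (Finset.univ.filter fun i : Fin n =>
          s i.castSucc ω < s (Fin.last n) ω).card = k} = ((n + 1 : ℕ) : ENNReal)⁻¹ := by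
  intro k hk1 hk2
  obtain ⟨m, rfl⟩ : ∃ m, k = m + 1 := ⟨k - 1, by omega⟩
  have hm : m < Fintype.card (Fin (n + 1)) := by simpa using hk2
  have hevent : {ω | 1 + (Finset.univ.filter fun i : Fin n =>
      s i.castSucc ω < s (Fin.last n) ω).card = m + 1} =
      {ω | rank (fun i => s i ω) (Fin.last n) = m} := by
    ext ω
    simp only [Set.mem_ofPred_eq, rank_last]
    omega
  rw [hevent, measure_rank_eq_inv_card hmeas hexch hdistinct (Fin.last n) hm, Fintype.card_fin]
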